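/- Let ρ₀ = ½|011⟩⟨011| + ½|100⟩⟨100| and let ρ' = U_AC ρ₀ U_AC† be the instrumental state obtained by applying only U_AC = exp(−(iπ/4)·X⊗I₂⊗X), so that ρ' = ½|χ₁⟩⟨χ₁| + ½|χ₂⟩⟨χ₂| with χ₁ = (|011⟩ − i|110⟩)/√2 and χ₂ = (|100⟩ − i|001⟩)/√2. Then ρ' has nonzero quantum discord D_{AB|C}: for every rank-one orthogonal projector P on ℂ², (I₄⊗P)ρ'(I₄⊗P) + (I₄⊗(I₂−P))ρ'(I₄⊗(I₂−P)) ≠ ρ'. -/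

import Mathlib

open Matrix
open scoped Kronecker

noncomputable section

/-- The Pauli-x matrix. -/
def X : Matrix (Fin 2) (Fin 2) ℂ := !![0, 1; 1, 0]

/-- The 2×2 identity matrix. -/
def Id2 : Matrix (Fin 2) (Fin 2) ℂ := 1

/-- `H_AC = X ⊗ I₂ ⊗ X` (tensor factors ordered A, B, C). -/
def HAC : Matrix (Fin 2 × Fin 2 × Fin 2) (Fin 2 × Fin 2 × Fin 2) ℂ := X ⊗ₖ (Id2 ⊗ₖ X)

/-- Standard basis vector `|0⟩` of ℂ². -/
def ket0 : Fin 2 → ℂ := ![1, 0]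

/-- Standard basis vector `|1⟩` of ℂ². -/
def ket1 : Fin 2 → ℂ := ![0, 1]

/-- `|abc⟩ = |a⟩⊗|b⟩⊗|c⟩ ∈ ℂ⁸` (Kronecker product of vectors). -/
def kron3 (u v w : Fin 2 → ℂ) : Fin 2 × Fin 2 × Fin 2 → ℂ :=
  fun p => u p.1 * v p.2.1 * w p.2.2

/-- The outer product (projector) `|v⟩⟨v|`. -/
def outer {n : Type*} (v : n → ℂ) : Matrix n n ℂ := vecMulVec v (star v)

/-- `ρ₀ = ½|011⟩⟨011| + ½|100⟩⟨100|`. -/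
def rho0 : Matrix (Fin 2 × Fin 2 × Fin 2) (Fin 2 × Fin 2 × Fin 2) ℂ :=
  (1 / 2 : ℂ) • outer (kron3 ket0 ket1 ket1) + (1 / 2 : ℂ) • outer (kron3 ket1 ket0 ket0)

/-- `U_AC = exp(−(iπ/4)·X⊗I₂⊗X)`. -/
def UAC : Matrix (Fin 2 × Fin 2 × Fin 2) (Fin 2 × Fin 2 × Fin 2) ℂ :=
  NormedSpace.exp ((-(Complex.I * ((Real.pi : ℂ) / 4))) • HAC)

/-- The instrumental state `ρ' = U_AC ρ₀ U_AC†`. -/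
def rhoPrime : Matrix (Fin 2 × Fin 2 × Fin 2) (Fin 2 × Fin 2 × Fin 2) ℂ :=
  UAC * rho0 * UACᴴ

/-- `χ₁ = (|011⟩ − i|110⟩)/√2`. -/
def chi1 : Fin 2 × Fin 2 × Fin 2 → ℂ :=
  ((Real.sqrt 2 : ℂ))⁻¹ • (kron3 ket0 ket1 ket1 - Complex.I • kron3 ket1 ket1 ket0)

/-- `χ₂ = (|100⟩ − i|001⟩)/√2`. -/
def chi2 : Fin 2 × Fin 2 × Fin 2 → ℂ :=
  ((Real.sqrt 2 : ℂ))⁻¹ • (kron3 ket1 ket0 ket0 - Complex.I • kron3 ket0 ket0 ket1)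

/-- `I₄ ⊗ P`: the operator acting as `P` on subsystem C and trivially on A, B. -/
def embedC (P : Matrix (Fin 2) (Fin 2) ℂ) :
    Matrix (Fin 2 × Fin 2 × Fin 2) (Fin 2 × Fin 2 × Fin 2) ℂ :=
  Id2 ⊗ₖ (Id2 ⊗ₖ P)

/-- The state after a von Neumann measurement `{P, I₂ − P}` on subsystem C. -/
def measC (P : Matrix (Fin 2) (Fin 2) ℂ)
    (ρ : Matrix (Fin 2 × Fin 2 × Fin 2) (Fin 2 × Fin 2 × Fin 2) ℂ) :
    Matrix (Fin 2 × Fin 2 × Fin 2) (Fin 2 × Fin 2 × Fin 2) ℂ :=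
  embedC P * ρ * embedC P + embedC (Id2 - P) * ρ * embedC (Id2 - P)

/-!
Since `X ⊗ I₂ ⊗ X` squares to the identity, `U_AC = cos(π/4) − i sin(π/4) · X ⊗ I₂ ⊗ X`, which
maps `|011⟩, |100⟩` to `χ₁, χ₂`.

A measurement `{P, 1 − P}` on `C` fixes `ρ'` exactly when `I₄ ⊗ P` commutes with `ρ'`, i.e. when
`P` commutes with every `2 × 2` block `⟨ab| ρ' |a'b'⟩` on `C`. The blocks at `(01, 11)` and
`(10, 00)` are nonzero multiples of `|1⟩⟨0|` and `|0⟩⟨1|`, so `P` would be a scalar matrix,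
whose rank is `0` or `2`.
-/

theorem exp_smul_of_mul_self_eq_one {A : Type*} [Ring A] [Algebra ℂ A]
    [TopologicalSpace A] [IsTopologicalRing A] [ContinuousSMul ℂ A] [T2Space A]
    {a : A} (ha : a * a = 1) (z : ℂ) :
    NormedSpace.exp (z • a) = Complex.cosh z • 1 + Complex.sinh z • a := by
  have hpow (n : ℕ) : a ^ (2 * n) = 1 := by rw [pow_mul, sq, ha, one_pow]
  rw [NormedSpace.exp_eq_tsum ℂ]
  refine HasSum.tsum_eq (HasSum.even_add_odd ?_ ?_)
  · convert (Complex.hasSum_cosh z).smul_const (1 : A) using 2 with n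
    rw [smul_pow, hpow, smul_smul, div_eq_inv_mul]
  · convert (Complex.hasSum_sinh z).smul_const a using 2 with n
    rw [smul_pow, pow_succ a, hpow, one_mul, smul_smul, div_eq_inv_mul]

lemma IsIdempotentElem.commute_of_mul_mul_add_mul_mul_eq {R : Type*} [Ring R] {p m : R}
    (hp : IsIdempotentElem p) (h : p * m * p + (1 - p) * m * (1 - p) = m) : Commute p m := by
  have hpq : p * (1 - p) = 0 := by rw [mul_sub, mul_one, hp.eq, sub_self]
  have hqp : (1 - p) * p = 0 := by rw [sub_mul, one_mul, hp.eq, sub_self]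
  have hleft : p * m = p * m * p := by
    conv_lhs => rw [← h]
    simp only [mul_add, ← mul_assoc, hp.eq, hpq, zero_mul, add_zero]
  have hright : m * p = p * m * p := by
    conv_lhs => rw [← h]
    simp only [add_mul, mul_assoc, hp.eq, hqp, mul_zero, add_zero]
  exact hleft.trans hright.symm

lemma Matrix.rank_scalar_ne_one {n K : Type*} [Fintype n] [DecidableEq n] [Nontrivial n]
    [Field K] (r : K) : (scalar n r).rank ≠ 1 := by
  rcases eq_or_ne r 0 with rfl | hr
  · rw [map_zero, rank_zero]
    exact zero_ne_one
  · rw [rank_of_isUnit _ ((isUnit_iff_ne_zero.mpr hr).map (scalar n))]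
    exact Fintype.one_lt_card.ne'

lemma outer_mulVec {n : Type*} [Fintype n] (M : Matrix n n ℂ) (v : n → ℂ) :
    outer (M *ᵥ v) = M * outer v * Mᴴ := by
  rw [outer, outer, star_mulVec, mul_vecMulVec, vecMulVec_mul]

lemma kronecker_mulVec_kron3 (A B C : Matrix (Fin 2) (Fin 2) ℂ) (u v w : Fin 2 → ℂ) :
    (A ⊗ₖ (B ⊗ₖ C)) *ᵥ kron3 u v w = kron3 (A *ᵥ u) (B *ᵥ v) (C *ᵥ w) := by
  ext ⟨a, b, c⟩
  simp only [mulVec, dotProduct, kron3, kroneckerMap_apply, Fintype.sum_prod_type,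
    Fin.sum_univ_two]
  ring

lemma X_mul_X : X * X = 1 := by
  simp [X, Matrix.one_fin_two]

lemma HAC_mul_HAC : HAC * HAC = 1 := by
  rw [HAC, ← mul_kronecker_mul, ← mul_kronecker_mul, X_mul_X, Id2, one_mul, one_kronecker_one,
    one_kronecker_one]

lemma UAC_eq : UAC = ((Real.sqrt 2 : ℂ))⁻¹ • (1 - Complex.I • HAC) := by
  have hsqrt : ((Real.sqrt 2 / 2 : ℝ) : ℂ) = ((Real.sqrt 2 : ℂ))⁻¹ := by
    rw [Real.sqrt_div_self', one_div, Complex.ofReal_inv]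
  have hπ : Complex.I * (Real.pi / 4) = ((Real.pi / 4 : ℝ) : ℂ) * Complex.I := by
    push_cast; ring
  have hcosh : Complex.cosh (-(Complex.I * (Real.pi / 4))) = ((Real.sqrt 2 : ℂ))⁻¹ := by
    rw [Complex.cosh_neg, hπ, Complex.cosh_mul_I, ← Complex.ofReal_cos, Real.cos_pi_div_four,
      hsqrt]
  have hsinh : Complex.sinh (-(Complex.I * (Real.pi / 4))) =
      -(((Real.sqrt 2 : ℂ))⁻¹ * Complex.I) := by
    rw [Complex.sinh_neg, hπ, Complex.sinh_mul_I, ← Complex.ofReal_sin, Real.sin_pi_div_four,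
      hsqrt]
  rw [UAC, exp_smul_of_mul_self_eq_one HAC_mul_HAC, hcosh, hsinh, smul_sub,
    smul_smul, neg_smul, sub_eq_add_neg]

lemma X_mulVec_ket0 : X *ᵥ ket0 = ket1 := by
  ext i; fin_cases i <;> simp [X, ket0, ket1]

lemma X_mulVec_ket1 : X *ᵥ ket1 = ket0 := by
  ext i; fin_cases i <;> simp [X, ket0, ket1]

lemma HAC_mulVec_kron3 (u v w : Fin 2 → ℂ) :
    HAC *ᵥ kron3 u v w = kron3 (X *ᵥ u) v (X *ᵥ w) := by
  rw [HAC, kronecker_mulVec_kron3, Id2, one_mulVec]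

lemma UAC_mulVec (v : Fin 2 × Fin 2 × Fin 2 → ℂ) :
    UAC *ᵥ v = ((Real.sqrt 2 : ℂ))⁻¹ • (v - Complex.I • HAC *ᵥ v) := by
  rw [UAC_eq, smul_mulVec, sub_mulVec, one_mulVec, smul_mulVec]

lemma rhoPrime_eq : rhoPrime = (1 / 2 : ℂ) • outer chi1 + (1 / 2 : ℂ) • outer chi2 := by
  rw [rhoPrime, rho0, mul_add, add_mul, Matrix.mul_smul, Matrix.smul_mul, Matrix.mul_smul,
    Matrix.smul_mul, ← outer_mulVec, ← outer_mulVec, UAC_mulVec, UAC_mulVec, HAC_mulVec_kron3,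
    HAC_mulVec_kron3, X_mulVec_ket0, X_mulVec_ket1]
  rfl

lemma embedC_mul (P Q : Matrix (Fin 2) (Fin 2) ℂ) : embedC (P * Q) = embedC P * embedC Q := by
  rw [embedC, embedC, embedC, ← mul_kronecker_mul, ← mul_kronecker_mul, Id2, one_mul]

lemma embedC_id_sub (P : Matrix (Fin 2) (Fin 2) ℂ) : embedC (Id2 - P) = 1 - embedC P := by
  ext ⟨a, b, c⟩ ⟨a', b', c'⟩
  simp only [embedC, Id2, kroneckerMap_apply, Matrix.sub_apply, one_apply, Prod.mk.injEq]
  split_ifs <;> simp_all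

lemma commute_embedC_of_measC_eq {P : Matrix (Fin 2) (Fin 2) ℂ}
    {ρ : Matrix (Fin 2 × Fin 2 × Fin 2) (Fin 2 × Fin 2 × Fin 2) ℂ} (hP : P * P = P)
    (h : measC P ρ = ρ) : Commute (embedC P) ρ := by
  refine IsIdempotentElem.commute_of_mul_mul_add_mul_mul_eq ?_ ?_
  · rw [IsIdempotentElem, ← embedC_mul, hP]
  · rwa [measC, embedC_id_sub] at h

def blockC (ρ : Matrix (Fin 2 × Fin 2 × Fin 2) (Fin 2 × Fin 2 × Fin 2) ℂ) (a b a' b' : Fin 2) :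
    Matrix (Fin 2) (Fin 2) ℂ :=
  of fun c c' => ρ (a, b, c) (a', b', c')

lemma blockC_embedC_mul (P : Matrix (Fin 2) (Fin 2) ℂ)
    (ρ : Matrix (Fin 2 × Fin 2 × Fin 2) (Fin 2 × Fin 2 × Fin 2) ℂ) (a b a' b' : Fin 2) :
    blockC (embedC P * ρ) a b a' b' = P * blockC ρ a b a' b' := by
  ext c c'
  simp [blockC, embedC, Id2, mul_apply, Fintype.sum_prod_type, one_apply]

lemma blockC_mul_embedC (P : Matrix (Fin 2) (Fin 2) ℂ)
    (ρ : Matrix (Fin 2 × Fin 2 × Fin 2) (Fin 2 × Fin 2 × Fin 2) ℂ) (a b a' b' : Fin 2) :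
    blockC (ρ * embedC P) a b a' b' = blockC ρ a b a' b' * P := by
  ext c c'
  simp [blockC, embedC, Id2, mul_apply, Fintype.sum_prod_type, one_apply]

lemma Commute.blockC_of_embedC {P : Matrix (Fin 2) (Fin 2) ℂ}
    {ρ : Matrix (Fin 2 × Fin 2 × Fin 2) (Fin 2 × Fin 2 × Fin 2) ℂ} (h : Commute (embedC P) ρ)
    (a b a' b' : Fin 2) : Commute P (blockC ρ a b a' b') := by
  rw [Commute, SemiconjBy, ← blockC_embedC_mul, ← blockC_mul_embedC, h.eq]

lemma inv_sqrt_two_mul_inv_sqrt_two_mul (z : ℂ) :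
    ((Real.sqrt 2 : ℂ))⁻¹ * (((Real.sqrt 2 : ℂ))⁻¹ * z) = z / 2 := by
  rw [← mul_assoc, ← mul_inv, ← Complex.ofReal_mul, Real.mul_self_sqrt zero_le_two]
  push_cast
  ring

lemma blockC_rhoPrime_01_11 : blockC rhoPrime 0 1 1 1 = (Complex.I / 4) • single 1 0 1 := by
  rw [rhoPrime_eq]
  ext c c'
  fin_cases c <;> fin_cases c' <;>
    norm_num [blockC, outer, vecMulVec_apply, chi1, chi2, kron3, ket0, ket1, single,
      inv_sqrt_two_mul_inv_sqrt_two_mul]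
  ring

lemma blockC_rhoPrime_10_00 : blockC rhoPrime 1 0 0 0 = (Complex.I / 4) • single 0 1 1 := by
  rw [rhoPrime_eq]
  ext c c'
  fin_cases c <;> fin_cases c' <;>
    norm_num [blockC, outer, vecMulVec_apply, chi1, chi2, kron3, ket0, ket1, single,
      inv_sqrt_two_mul_inv_sqrt_two_mul]
  ring

theorem instrumental_state_has_nonzero_discord :
    rhoPrime = (1 / 2 : ℂ) • outer chi1 + (1 / 2 : ℂ) • outer chi2 ∧
    ∀ P : Matrix (Fin 2) (Fin 2) ℂ,
      P.IsHermitian → P * P = P → P.rank = 1 → measC P rhoPrime ≠ rhoPrime := by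
  refine ⟨rhoPrime_eq, fun P _ hP hrank hmeas => ?_⟩
  have hcomm := commute_embedC_of_measC_eq hP hmeas
  have hI : Complex.I / 4 ≠ 0 := by simp
  have h10 : Commute P (single 1 0 1) := (Commute.smul_right_iff₀ hI).mp
    (blockC_rhoPrime_01_11 ▸ hcomm.blockC_of_embedC 0 1 1 1)
  have h01 : Commute P (single 0 1 1) := (Commute.smul_right_iff₀ hI).mp
    (blockC_rhoPrime_10_00 ▸ hcomm.blockC_of_embedC 1 0 0 0)
  obtain ⟨r, rfl⟩ : P ∈ Set.range (scalar (Fin 2)) := by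
    refine mem_range_scalar_of_commute_single fun i j hij => ?_
    fin_cases i <;> fin_cases j
    · exact absurd rfl hij
    · exact h01.symm
    · exact h10.symm
    · exact absurd rfl hij
  exact rank_scalar_ne_one r hrank

end
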